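/- For p ∈ (-∞,-1] ∪ (0,∞), the inequality (2p + (p+3)cos t)/((3p+1) + 2cos t) < sin t / t holds for all t ∈ (0, π/2) if and only if 0 < p ≤ 1/(π-3). -/

import Mathlib

/-!
For `p > 0` the denominator is positive and, with `A t = t (2 + cos t) - 3 sin t` (positive by
the Cusa–Huygens inequality) and `B t = sin t + sin 2t - 3 t cos t`, the inequality at `t` reads
`p A t < B t`. At `t = π/2` this is `p (π - 3) < 1`, so continuity forces `p ≤ 1/(π - 3)`.
Conversely it suffices that `A t < (π - 3) B t` on `(0, π/2)`: on `(0, 1.4]` this follows from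
alternating Taylor bounds for `sin` and `cos`, on `[1.4, π/2)` from low-order bounds in
`u = π/2 - t`. For `p ≤ -1` the denominator is negative and `A + B = 2 (t - sin t) (1 - cos t) ≥ 0`
reverses the inequality.
-/

open Real Set Finset Nat Filter Topology

noncomputable def sinTaylor (n : ℕ) (x : ℝ) : ℝ :=
  ∑ k ∈ range n, (-1) ^ k * x ^ (2 * k + 1) / (2 * k + 1)!

noncomputable def cosTaylor (n : ℕ) (x : ℝ) : ℝ :=
  ∑ k ∈ range n, (-1) ^ k * x ^ (2 * k) / (2 * k)!

lemma hasDerivAt_sinTaylor (n : ℕ) (x : ℝ) : HasDerivAt (sinTaylor n) (cosTaylor n x) x := by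
  unfold sinTaylor cosTaylor
  refine (HasDerivAt.fun_sum fun k _ =>
    ((hasDerivAt_pow (2 * k + 1) x).const_mul ((-1 : ℝ) ^ k)).div_const _).congr_deriv
    (sum_congr rfl fun k _ => ?_)
  rw [factorial_succ]
  push_cast
  field_simp

lemma hasDerivAt_cosTaylor_succ (n : ℕ) (x : ℝ) :
    HasDerivAt (cosTaylor (n + 1)) (-sinTaylor n x) x := by
  unfold sinTaylor cosTaylor
  refine (HasDerivAt.fun_sum fun k _ =>
    ((hasDerivAt_pow (2 * k) x).const_mul ((-1 : ℝ) ^ k)).div_const _).congr_deriv ?_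
  rw [sum_range_succ', ← sum_neg_distrib]
  simp only [mul_zero, CharP.cast_eq_zero, zero_mul, zero_div, add_zero]
  refine sum_congr rfl fun k _ => ?_
  rw [show 2 * (k + 1) = 2 * k + 1 + 1 by ring, factorial_succ, Nat.add_sub_cancel, pow_succ]
  push_cast
  field_simp

lemma nonneg_of_hasDerivAt_of_nonneg {f f' : ℝ → ℝ} (hf : ∀ y, HasDerivAt f (f' y) y)
    (hf₀ : f 0 = 0) (hf' : ∀ y, 0 < y → 0 ≤ f' y) {x : ℝ} (hx : 0 ≤ x) : 0 ≤ f x := by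
  have hmono : MonotoneOn f (Ici 0) :=
    monotoneOn_of_hasDerivWithinAt_nonneg (convex_Ici 0)
      (fun y _ => (hf y).continuousAt.continuousWithinAt)
      (fun y _ => (hf y).hasDerivWithinAt) (fun y hy => hf' y (by simpa using hy))
  simpa [hf₀] using hmono self_mem_Ici hx hx

lemma sin_sub_sinTaylor_nonneg_of_cos {n : ℕ}
    (hcos : ∀ y, 0 ≤ y → 0 ≤ (-1) ^ n * (cos y - cosTaylor n y)) {x : ℝ} (hx : 0 ≤ x) :
    0 ≤ (-1) ^ n * (sin x - sinTaylor n x) :=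
  nonneg_of_hasDerivAt_of_nonneg
    (fun y => ((hasDerivAt_sin y).sub (hasDerivAt_sinTaylor n y)).const_mul _)
    (by simp [sinTaylor]) (fun y hy => hcos y hy.le) hx

lemma cos_sub_cosTaylor_nonneg_of_sin {n : ℕ}
    (hsin : ∀ y, 0 ≤ y → 0 ≤ (-1) ^ n * (sin y - sinTaylor n y)) {x : ℝ} (hx : 0 ≤ x) :
    0 ≤ (-1) ^ (n + 1) * (cos x - cosTaylor (n + 1) x) :=
  nonneg_of_hasDerivAt_of_nonneg
    (fun y => ((hasDerivAt_cos y).sub (hasDerivAt_cosTaylor_succ n y)).const_mul _)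
    (by simp [cosTaylor, sum_range_succ'])
    (fun y hy => by have := hsin y hy.le; rw [pow_succ]; linarith) hx

lemma cos_sub_cosTaylor_nonneg (n : ℕ) {x : ℝ} (hx : 0 ≤ x) :
    0 ≤ (-1) ^ (n + 1) * (cos x - cosTaylor (n + 1) x) := by
  induction n generalizing x with
  | zero => simp [cosTaylor, cos_le_one]
  | succ n ih =>
    exact cos_sub_cosTaylor_nonneg_of_sin (fun _ => sin_sub_sinTaylor_nonneg_of_cos fun _ => ih) hx

lemma sinTaylor_le_sin (m : ℕ) {x : ℝ} (hx : 0 ≤ x) : sinTaylor (2 * m + 2) x ≤ sin x := by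
  have := sin_sub_sinTaylor_nonneg_of_cos (fun _ => cos_sub_cosTaylor_nonneg (2 * m + 1)) hx
  rw [show 2 * m + 1 + 1 = 2 * m + 2 by ring, pow_add, pow_mul] at this
  simpa using this

lemma sin_le_sinTaylor (m : ℕ) {x : ℝ} (hx : 0 ≤ x) : sin x ≤ sinTaylor (2 * m + 1) x := by
  have := sin_sub_sinTaylor_nonneg_of_cos (fun _ => cos_sub_cosTaylor_nonneg (2 * m)) hx
  rw [pow_succ, pow_mul] at this
  simpa using this

lemma cosTaylor_le_cos (m : ℕ) {x : ℝ} (hx : 0 ≤ x) : cosTaylor (2 * m + 2) x ≤ cos x := by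
  have := cos_sub_cosTaylor_nonneg (2 * m + 1) hx
  rw [show 2 * m + 1 + 1 = 2 * m + 2 by ring, pow_add, pow_mul] at this
  simpa using this

lemma cos_le_cosTaylor (m : ℕ) {x : ℝ} (hx : 0 ≤ x) : cos x ≤ cosTaylor (2 * m + 1) x := by
  have := cos_sub_cosTaylor_nonneg (2 * m) hx
  rw [pow_succ, pow_mul] at this
  simpa using this

-- For `p > 0` the inequality at `t` says `p < critNum t / cusaGap t`.
noncomputable def cusaGap (t : ℝ) : ℝ := t * (2 + cos t) - 3 * sin t

noncomputable def critNum (t : ℝ) : ℝ := sin t + sin (2 * t) - 3 * t * cos t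

lemma cusaGap_pos {t : ℝ} (ht : 0 < t) (ht' : t ^ 2 < 12) : 0 < cusaGap t := by
  have hs := sin_le_sinTaylor 1 ht.le
  have hc := cosTaylor_le_cos 1 ht.le
  norm_num [sinTaylor, cosTaylor, sum_range_succ, factorial] at hs hc
  have hrem : 0 < t ^ 5 * (12 - t ^ 2) := mul_pos (pow_pos ht 5) (by linarith)
  unfold cusaGap
  nlinarith [mul_le_mul_of_nonneg_left hc ht.le]

lemma div_lt_sin_div_iff {p t : ℝ} (hp : 0 < p) (ht : t ∈ Ioo 0 (π / 2)) :
    (2 * p + (p + 3) * cos t) / (3 * p + 1 + 2 * cos t) < sin t / t ↔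
      p * cusaGap t < critNum t := by
  have hD : 0 < 3 * p + 1 + 2 * cos t := by
    nlinarith [cos_nonneg_of_mem_Icc ⟨by linarith [ht.1, pi_pos], ht.2.le⟩]
  rw [div_lt_div_iff₀ hD ht.1, cusaGap, critNum, sin_two_mul]
  constructor <;> intro h <;> linarith

lemma sin_div_le_of_le_neg_one {p t : ℝ} (hp : p ≤ -1) (ht : t ∈ Ioo 0 (π / 2)) :
    sin t / t ≤ (2 * p + (p + 3) * cos t) / (3 * p + 1 + 2 * cos t) := by
  obtain ⟨ht, ht'⟩ := ht
  have hc : cos t < 1 := by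
    simpa using cos_lt_cos_of_nonneg_of_le_pi_div_two le_rfl ht'.le ht
  have hD : 3 * p + 1 + 2 * cos t < 0 := by linarith
  have hA : 0 ≤ cusaGap t := (cusaGap_pos ht (by nlinarith [pi_lt_d2])).le
  have hsum : 0 ≤ critNum t + cusaGap t := by
    have := mul_nonneg (sub_nonneg.2 (sin_le ht.le)) (sub_nonneg.2 hc.le)
    rw [critNum, cusaGap, sin_two_mul]
    linarith
  have hkey : 0 ≤ critNum t - p * cusaGap t := by
    linarith [mul_le_mul_of_nonneg_right hp hA]
  rw [← neg_div_neg_eq (2 * p + _), div_le_div_iff₀ ht (neg_pos.2 hD)]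
  rw [critNum, cusaGap, sin_two_mul] at hkey
  linarith

lemma exists_critNum_lt_mul_cusaGap {p : ℝ} (hp : 1 < p * (π - 3)) :
    ∃ t ∈ Ioo 0 (π / 2), critNum t < p * cusaGap t := by
  have hcont : Continuous fun t => p * cusaGap t - critNum t := by
    unfold cusaGap critNum
    fun_prop
  have hval : 0 < p * cusaGap (π / 2) - critNum (π / 2) := by
    simp only [cusaGap, critNum, sin_pi_div_two, cos_pi_div_two,
      show 2 * (π / 2) = π by ring, sin_pi]
    linarith
  have hev : ∀ᶠ t in 𝓝[<] (π / 2), 0 < p * cusaGap t - critNum t ∧ t ∈ Ioo 0 (π / 2) :=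
    ((hcont.continuousAt.eventually (lt_mem_nhds hval)).filter_mono nhdsWithin_le_nhds).and
      (Ioo_mem_nhdsLT (by positivity))
  obtain ⟨t, hpos, ht⟩ := hev.exists
  exact ⟨t, ht, by linarith⟩

lemma cusaGap_lt_pi_sub_three_mul_critNum_of_le {t : ℝ} (ht : 0 < t) (ht' : t ≤ 1.4) :
    cusaGap t < (π - 3) * critNum t := by
  have hπ : 3.141592 < π := pi_gt_d6
  have hπ' : π < 3.141593 := pi_lt_d6
  have hs := sinTaylor_le_sin 1 ht.le
  have hs2 := sinTaylor_le_sin 2 (by linarith : 0 ≤ 2 * t)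
  have hc := cos_le_cosTaylor 2 ht.le
  norm_num [sinTaylor, cosTaylor, sum_range_succ, factorial] at hs hs2 hc
  have ht2 : t ^ 2 ≤ 1.96 := by nlinarith
  -- the Taylor lower bound for `(π - 3) * critNum t - cusaGap t` is `t ^ 5` times this
  have hQ : 0 < (9 * π - 28) / 60 + (328 - 108 * π) / 5040 * t ^ 2
      + (485 * π - 1464) / 362880 * t ^ 4 - 2048 * (π - 3) / 39916800 * t ^ 6 := by
    nlinarith [mul_nonneg (by linarith : (0:ℝ) ≤ 108 * π - 328) (by linarith : (0:ℝ) ≤ 1.96 - t ^ 2),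
      mul_nonneg (by linarith : (0:ℝ) ≤ 2048 * π - 6144)
        (by nlinarith [sq_nonneg t, sq_nonneg (t ^ 2)] : (0:ℝ) ≤ 1.96 ^ 3 - t ^ 6),
      mul_nonneg (by linarith : (0:ℝ) ≤ 485 * π - 1464) (sq_nonneg (t ^ 2))]
  unfold cusaGap critNum
  nlinarith [mul_le_mul_of_nonneg_left hs pi_pos.le,
    mul_le_mul_of_nonneg_left hs2 (by linarith : (0:ℝ) ≤ π - 3),
    mul_le_mul_of_nonneg_left hc (by nlinarith : (0:ℝ) ≤ (3 * π - 8) * t),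
    mul_pos (pow_pos ht 5) hQ]

lemma cusaGap_lt_pi_sub_three_mul_critNum_of_ge {t : ℝ} (ht : 1.4 ≤ t) (ht' : t < π / 2) :
    cusaGap t < (π - 3) * critNum t := by
  have hπ : 3.141592 < π := pi_gt_d6
  have hπ' : π < 3.141593 := pi_lt_d6
  obtain ⟨u, rfl⟩ : ∃ u, t = π / 2 - u := ⟨π / 2 - t, by ring⟩
  have hu : 0 < u := by linarith
  have hu' : u ≤ 0.171 := by linarith
  have hc := one_sub_sq_div_two_le_cos (x := u)
  have hs := sin_le hu.le
  have hs2 := sin_ge_sub_cube (by linarith : 0 ≤ 2 * u)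
  -- the Taylor lower bound for `(π - 3) * critNum t - cusaGap t` is `u` times this
  have hquad : 0 < (12 * π - 8 - 3 * π ^ 2) / 2 + (5 * π / 2 - 8) * u - 4 * (π - 3) / 3 * u ^ 2 := by
    nlinarith
  unfold cusaGap critNum
  rw [sin_pi_div_two_sub, cos_pi_div_two_sub, show 2 * (π / 2 - u) = π - 2 * u by ring, sin_pi_sub]
  nlinarith [mul_le_mul_of_nonneg_left hc pi_pos.le,
    mul_le_mul_of_nonneg_left hs2 (by linarith : (0:ℝ) ≤ π - 3),
    mul_le_mul_of_nonneg_left hs (by nlinarith : (0:ℝ) ≤ (3 * π - 8) * (π / 2 - u)),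
    mul_pos hu hquad]

lemma cusaGap_lt_pi_sub_three_mul_critNum {t : ℝ} (ht : t ∈ Ioo 0 (π / 2)) :
    cusaGap t < (π - 3) * critNum t :=
  (le_or_gt t 1.4).elim (cusaGap_lt_pi_sub_three_mul_critNum_of_le ht.1)
    fun h => cusaGap_lt_pi_sub_three_mul_critNum_of_ge h.le ht.2

lemma mul_cusaGap_lt_critNum {p t : ℝ} (hp : p ≤ 1 / (π - 3)) (ht : t ∈ Ioo 0 (π / 2)) :
    p * cusaGap t < critNum t := by
  have hπ : 0 < π - 3 := by linarith [pi_gt_three]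
  have hA : 0 ≤ cusaGap t := (cusaGap_pos ht.1 (by nlinarith [ht.1, ht.2, pi_lt_d2])).le
  calc p * cusaGap t ≤ 1 / (π - 3) * cusaGap t := mul_le_mul_of_nonneg_right hp hA
    _ < critNum t := by
      rw [one_div_mul_eq_div, div_lt_iff₀ hπ, mul_comm]
      exact cusaGap_lt_pi_sub_three_mul_critNum ht

theorem stmt9 (p : ℝ) (hp : p ≤ -1 ∨ 0 < p) :
    (∀ t ∈ Set.Ioo 0 (Real.pi/2),
      (2*p + (p+3)*Real.cos t) / ((3*p+1) + 2*Real.cos t) < Real.sin t / t) ↔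
    (0 < p ∧ p ≤ 1/(Real.pi - 3)) := by
  have hπ : 0 < π - 3 := by linarith [pi_gt_three]
  constructor
  · intro h
    have h₁ : (1 : ℝ) ∈ Ioo 0 (π / 2) := ⟨one_pos, by linarith [pi_gt_three]⟩
    have hp₀ : 0 < p := hp.resolve_left fun hp₁ =>
      (h 1 h₁).not_ge (sin_div_le_of_le_neg_one hp₁ h₁)
    refine ⟨hp₀, le_of_not_gt fun hgt => ?_⟩
    obtain ⟨t, ht, hlt⟩ := exists_critNum_lt_mul_cusaGap ((div_lt_iff₀ hπ).1 hgt)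
    exact hlt.not_gt ((div_lt_sin_div_iff hp₀ ht).1 (h t ht))
  · rintro ⟨hp₀, hp₁⟩ t ht
    exact (div_lt_sin_div_iff hp₀ ht).2 (mul_cusaGap_lt_critNum hp₁ ht)
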